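/- Fréchet mean estimator via unrolling: suppose for each time t_j the sample Fréchet mean γ̂(t_j) satisfies (1/n) Σ_{i=1}^n exp^{-1}_{γ̂(t_j)}(x_i(t_j)) = 0. Then the least-squares estimator M̂_w = argmin_{M} Σ_i tr[(H(X_i; Γ̂)Φ⁻ − M)(H(X_i; Γ̂)Φ⁻ − M)ᵀ], where Φ⁻ = Φᵀ(ΦΦᵀ)^{-1} is the right inverse of the full-row-rank matrix Φ, equals H(Γ̂; Γ̂) Φ⁻, i.e. the projection onto the basis of the unrolling of the sample Fréchet mean curve. -/
import Mathlib


open Matrix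

lemma sum_sq_shift' {n : ℕ} (a : Fin n → ℝ) (b m : ℝ) (h : ∑ i, a i = n * b) :
    ∑ i, (a i - m) ^ 2 = (∑ i, (a i - b) ^ 2) + n * (b - m) ^ 2 := by
  have expand : ∀ m' : ℝ, ∑ i, (a i - m') ^ 2
      = ∑ i, (a i) ^ 2 - 2 * m' * (n * b) + n * m' ^ 2 := by
    intro m'
    have e : ∀ i : Fin n, (a i - m') ^ 2 = (a i) ^ 2 - 2 * m' * a i + m' ^ 2 :=
      fun i => by ring
    simp_rw [e]
    rw [Finset.sum_add_distrib, Finset.sum_sub_distrib, ← Finset.mul_sum, h,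
      Finset.sum_const, Finset.card_univ, Fintype.card_fin, nsmul_eq_mul]
  rw [expand m, expand b]; ring

/-- Fréchet-mean estimator via unrolling.  Let `X i` be the discrete
sample curves, `Γhat` the discretized sample Fréchet mean curve, `Log j` the linear
unwrapping coordinates `Uᵀ P^c_{0←1} P^{γ̂}_{0←t_j} exp⁻¹_{γ̂(t_j)}(·)` at time
`t_j`, and `G j` the coordinates of the unrolling `γ̂↓_b(t_j)`, so the unwrapping
coordinate matrix of a curve `Y` is `H Y = (G j + Log j (Y j))_j`.  If the sample
Fréchet mean first-order condition `Σ_i exp⁻¹_{γ̂(t_j)}(x_i(t_j)) = 0` holds for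
every `j`, and `Φ` has full row rank with right inverse `Φ⁻ = Φᵀ(ΦΦᵀ)⁻¹`, then the
least-squares estimator
`M̂_w = argmin_M Σ_i tr((H(X_i)Φ⁻ − M)(H(X_i)Φ⁻ − M)ᵀ)` equals `H(Γ̂)Φ⁻`. -/
theorem frechet_estimator_via_unrolling
    {M : Type*} {d k r n : ℕ} (hn : 0 < n)
    (X : Fin n → Fin r → M)
    (Γhat : Fin r → M)
    (Log : Fin r → M → EuclideanSpace ℝ (Fin d))
    (G : Fin r → EuclideanSpace ℝ (Fin d))
    (hΓ : ∀ j : Fin r, Log j (Γhat j) = 0)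
    (hfre : ∀ j : Fin r, (∑ i, Log j (X i j)) = 0)
    (Φ : Matrix (Fin k) (Fin r) ℝ) (hΦ : IsUnit (Φ * Φᵀ).det) :
    let H : (Fin r → M) → Matrix (Fin d) (Fin r) ℝ :=
      fun Y => Matrix.of fun a j => G j a + Log j (Y j) a
    let Φinv : Matrix (Fin r) (Fin k) ℝ := Φᵀ * (Φ * Φᵀ)⁻¹
    let f : Matrix (Fin d) (Fin k) ℝ → ℝ :=
      fun Mw => ∑ i, ((H (X i) * Φinv - Mw) * (H (X i) * Φinv - Mw)ᵀ).trace
    (∀ Mw : Matrix (Fin d) (Fin k) ℝ, f (H Γhat * Φinv) ≤ f Mw) ∧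
      ∀ Mw : Matrix (Fin d) (Fin k) ℝ,
        (∀ Mw' : Matrix (Fin d) (Fin k) ℝ, f Mw ≤ f Mw') → Mw = H Γhat * Φinv := by
  intro H Φinv f
  set A : Fin n → Matrix (Fin d) (Fin k) ℝ := fun i => H (X i) * Φinv with hA
  set Ab : Matrix (Fin d) (Fin k) ℝ := H Γhat * Φinv with hAb
  have hlog : ∀ (l : Fin r) (a : Fin d), ∑ i, Log l (X i l) a = 0 := by
    intro l a
    have h0 : (EuclideanSpace.proj a : EuclideanSpace ℝ (Fin d) →L[ℝ] ℝ)
        (∑ i, Log l (X i l)) = 0 := by rw [hfre l]; simp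
    rw [map_sum] at h0
    simpa using h0
  have hsum : ∀ a j, ∑ i, A i a j = n * Ab a j := by
    intro a j
    simp only [hA, hAb, Matrix.mul_apply]
    rw [Finset.sum_comm, Finset.mul_sum]
    refine Finset.sum_congr rfl fun l _ => ?_
    have h1 : ∀ i, H (X i) a l = G l a + Log l (X i l) a := fun i => rfl
    have h2 : H Γhat a l = G l a := by
      show G l a + Log l (Γhat l) a = G l a
      rw [hΓ l]; simp
    simp_rw [h1, h2]
    rw [← Finset.sum_mul, Finset.sum_add_distrib, hlog l a,
      Finset.sum_const, Finset.card_univ, Fintype.card_fin, nsmul_eq_mul]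
    ring
  have ftrace : ∀ Mw, f Mw = ∑ a, ∑ j, ∑ i, (A i a j - Mw a j) ^ 2 := by
    intro Mw
    simp only [f, Matrix.trace, Matrix.diag_apply, Matrix.mul_apply,
      Matrix.transpose_apply, Matrix.sub_apply, ← hA, ← sq]
    rw [Finset.sum_comm]
    exact Finset.sum_congr rfl fun a _ => Finset.sum_comm
  have key : ∀ Mw, f Mw = f Ab + n * ∑ a, ∑ j, (Ab a j - Mw a j) ^ 2 := by
    intro Mw
    rw [ftrace Mw, ftrace Ab, Finset.mul_sum, ← Finset.sum_add_distrib]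
    refine Finset.sum_congr rfl fun a _ => ?_
    rw [Finset.mul_sum, ← Finset.sum_add_distrib]
    refine Finset.sum_congr rfl fun j _ => ?_
    exact sum_sq_shift' _ _ _ (hsum a j)
  have hnR : (0 : ℝ) < n := by exact_mod_cast hn
  constructor
  · intro Mw
    rw [key Mw]
    have h0 : 0 ≤ (n : ℝ) * ∑ a, ∑ j, (Ab a j - Mw a j) ^ 2 := by positivity
    linarith
  · intro Mw hmin
    have h1 := hmin Ab
    rw [key Mw] at h1
    have h2 : ∑ a, ∑ j, (Ab a j - Mw a j) ^ 2 ≤ 0 := by nlinarith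
    have h3 : ∑ a, ∑ j, (Ab a j - Mw a j) ^ 2 = 0 :=
      le_antisymm h2 (by positivity)
    have h4 := (Finset.sum_eq_zero_iff_of_nonneg
      (fun a _ => Finset.sum_nonneg fun j _ => sq_nonneg _)).mp h3
    ext a j
    have h5 := (Finset.sum_eq_zero_iff_of_nonneg
      (fun j _ => sq_nonneg _)).mp (h4 a (Finset.mem_univ a)) j (Finset.mem_univ j)
    have := pow_eq_zero_iff (n := 2) (by norm_num) |>.mp h5
    have := sub_eq_zero.mp this
    exact this.symm
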